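/- Let K/F be a cyclic Galois extension of number fields of degree m, Gal(K/F) = ⟨σ⟩, d ∈ O_K \ O_F with f = t^m − d irreducible in K[t;σ], and Λ the natural order in (K/F,σ,d). Let I = q₁^{s₁}···q_t^{s_t} be the factorization of a nonzero ideal I of O_F into prime ideals. Then Λ/IΛ is isomorphic as an O_F/I-algebra to the direct product over j = 1,...,t of the Petit algebras ((O_K/q_j^{s_j}O_K)/(O_F/q_j^{s_j}), σ̄, d + q_j^{s_j}O_K). -/

import Mathlib

/-- An abstract presentation of the skew polynomial ring `S[t;σ,δ]`:
a ring `R` together with an embedding of `S`, a variable `t` satisfying the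
commutation rule `t·a = σ(a)·t + δ(a)`, such that the `t^i` form a basis of `R`
as a left `S`-module (encoded by the coefficient equivalence). -/
structure SkewPolyRing (S : Type*) (R : Type*) [Ring S] [Ring R]
    (σ : S →+* S) (δ : S →+ S) : Type _ where
  ι : S →+* R
  t : R
  t_comm : ∀ a : S, t * ι a = ι (σ a) * t + ι (δ a)
  coeff : R ≃+ (ℕ →₀ S)
  coeff_symm : ∀ p : ℕ →₀ S, coeff.symm p = p.sum fun i a => ι a * t ^ i

namespace SkewPolyRing

variable {S R : Type*} [Ring S] [Ring R] {σ : S →+* S} {δ : S →+ S}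

/-- `g` has degree `< m`. -/
def degLT (P : SkewPolyRing S R σ δ) (g : R) (m : ℕ) : Prop :=
  ∀ i, m ≤ i → P.coeff g i = 0

/-- The degree of a skew polynomial (with `deg 0 = 0` by convention). -/
noncomputable def deg (P : SkewPolyRing S R σ δ) (g : R) : ℕ :=
  (P.coeff g).support.sup id

/-- `f` is monic of degree `m`. -/
def MonicDeg (P : SkewPolyRing S R σ δ) (f : R) (m : ℕ) : Prop :=
  P.coeff f m = 1 ∧ ∀ i, m < i → P.coeff f i = 0

/-- `modr` computes a remainder of right division by `f`. -/
def IsModr (P : SkewPolyRing S R σ δ) (f : R) (m : ℕ) (modr : R → R) : Prop :=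
  ∀ g : R, P.degLT (modr g) m ∧ ∃ q : R, g = q * f + modr g

end SkewPolyRing

open NumberField Finsupp

/-! Reducing coefficients modulo `J_j = q_j^{s_j} O_K` is a ring map
`O_K[t;σ] → (O_K/J_j)[t;σ̄]`, since reduction commutes with `σ`. It sends `t^m - d` to a monic
polynomial of degree `m`, and remainders of right division by a monic polynomial are unique,
so it carries the Petit product of `Λ` to that of the reduced algebra. The `J_j` are pairwise
coprime, so by the Chinese remainder theorem the combined reduction is onto on polynomials of
degree `< m`, and its kernel consists of those whose coefficients lie in
`⋂ J_j = ∏ J_j = I O_K`. -/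

open Function

namespace SkewPolyRing

section Basic

variable {S R : Type*} [Ring S] [Ring R] {σ : S →+* S} (P : SkewPolyRing S R σ 0)

theorem t_mul_ι (a : S) : P.t * P.ι a = P.ι (σ a) * P.t := by
  simpa using P.t_comm a

theorem t_pow_mul_ι (n : ℕ) (a : S) : P.t ^ n * P.ι a = P.ι (σ^[n] a) * P.t ^ n := by
  induction n with
  | zero => simp
  | succ n ih =>
    rw [pow_succ', mul_assoc, ih, ← mul_assoc, t_mul_ι, mul_assoc, ← pow_succ',
      iterate_succ_apply']

theorem coeff_symm_single (i : ℕ) (a : S) : P.coeff.symm (single i a) = P.ι a * P.t ^ i := by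
  simp [P.coeff_symm]

theorem coeff_ι_mul_t_pow (i : ℕ) (a : S) : P.coeff (P.ι a * P.t ^ i) = single i a := by
  rw [← coeff_symm_single, AddEquiv.apply_symm_apply]

theorem coeff_one : P.coeff 1 = single 0 1 := by
  simpa using P.coeff_ι_mul_t_pow 0 1

theorem ι_mul_t_pow_mul_ι_mul_t_pow (i j : ℕ) (a b : S) :
    P.ι a * P.t ^ i * (P.ι b * P.t ^ j) = P.ι (a * σ^[i] b) * P.t ^ (i + j) := by
  rw [map_mul, pow_add, mul_assoc, ← mul_assoc (P.t ^ i), t_pow_mul_ι]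
  simp only [mul_assoc]

theorem coeff_mul (g h : R) (n : ℕ) :
    P.coeff (g * h) n =
      ∑ i ∈ Finset.range (n + 1), P.coeff g i * σ^[i] (P.coeff h (n - i)) := by
  obtain ⟨p, rfl⟩ := P.coeff.symm.surjective g
  obtain ⟨q, rfl⟩ := P.coeff.symm.surjective h
  simp only [AddEquiv.apply_symm_apply]
  induction p using Finsupp.induction_linear with
  | zero => simp
  | add p₁ p₂ h₁ h₂ => simp [add_mul, h₁, h₂, Finset.sum_add_distrib]
  | single i a =>
    induction q using Finsupp.induction_linear with
    | zero => simp
    | add q₁ q₂ h₁ h₂ => simp [mul_add, h₁, h₂, Finset.sum_add_distrib]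
    | single j b =>
      rw [coeff_symm_single, coeff_symm_single, ι_mul_t_pow_mul_ι_mul_t_pow,
        coeff_ι_mul_t_pow]
      simp only [single_apply, ite_mul, zero_mul, Finset.sum_ite_eq, Finset.mem_range]
      by_cases hn : i + j = n
      · simp [← hn]
      · grind [iterate_map_zero]

theorem monicDeg_coeff_symm_single_sub_single {m : ℕ} (hm : 0 < m) (c : S) :
    P.MonicDeg (P.coeff.symm (single m 1 - single 0 c)) m := by
  refine ⟨by simp [hm.ne], fun i hi => ?_⟩
  simp [hi.ne, (hm.trans hi).ne]

theorem coeff_eq_zero_of_deg_lt {g : R} {i : ℕ} (h : P.deg g < i) : P.coeff g i = 0 := by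
  by_contra hi
  exact h.not_ge (Finset.le_sup (f := id) (Finsupp.mem_support_iff.mpr hi))

theorem coeff_deg_ne_zero {g : R} (hg : g ≠ 0) : P.coeff g (P.deg g) ≠ 0 := by
  have hs : (P.coeff g).support.Nonempty :=
    Finsupp.support_nonempty_iff.mpr ((map_ne_zero_iff _ P.coeff.injective).mpr hg)
  obtain ⟨i, hi, hsup⟩ := Finset.exists_mem_eq_sup _ hs id
  rw [deg, hsup]
  exact Finsupp.mem_support_iff.mp hi

variable {P} {f : R} {m : ℕ}

theorem coeff_mul_monicDeg_deg_add (hf : P.MonicDeg f m) (u : R) :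
    P.coeff (u * f) (P.deg u + m) = P.coeff u (P.deg u) := by
  rw [coeff_mul, Finset.sum_eq_single (P.deg u)]
  · rw [Nat.add_sub_cancel_left, hf.1, iterate_map_one, mul_one]
  · intro i _ hi
    rcases lt_or_gt_of_ne hi with hlt | hgt
    · rw [hf.2 _ (by omega), iterate_map_zero, mul_zero]
    · rw [P.coeff_eq_zero_of_deg_lt hgt, zero_mul]
  · exact fun h => absurd (Finset.mem_range.mpr (by omega)) h

theorem eq_zero_of_degLT_mul_monicDeg (hf : P.MonicDeg f m) {u : R}
    (h : P.degLT (u * f) m) : u = 0 := by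
  by_contra hu
  exact P.coeff_deg_ne_zero hu (coeff_mul_monicDeg_deg_add hf u ▸ h _ (Nat.le_add_left m _))

theorem eq_of_mul_add_eq_mul_add (hf : P.MonicDeg f m) {q₁ q₂ r₁ r₂ : R}
    (h₁ : P.degLT r₁ m) (h₂ : P.degLT r₂ m) (h : q₁ * f + r₁ = q₂ * f + r₂) :
    r₁ = r₂ := by
  have hdiff : r₁ - r₂ = (q₂ - q₁) * f :=
    calc r₁ - r₂ = q₁ * f + r₁ - q₁ * f - r₂ := by abel
      _ = q₂ * f + r₂ - q₁ * f - r₂ := by rw [h]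
      _ = (q₂ - q₁) * f := by rw [sub_mul]; abel
  have hlt : P.degLT ((q₂ - q₁) * f) m := fun i hi => by
    rw [← hdiff, map_sub, Finsupp.sub_apply, h₁ i hi, h₂ i hi, sub_zero]
  rw [← sub_eq_zero, hdiff, eq_zero_of_degLT_mul_monicDeg hf hlt, zero_mul]

end Basic

section Map

variable {S S' R R' : Type*} [Ring S] [Ring S'] [Ring R] [Ring R'] {σ : S →+* S}
  {σ' : S' →+* S'} (P : SkewPolyRing S R σ 0) (P' : SkewPolyRing S' R' σ' 0) (ψ : S →+* S')
  (hψ : ∀ x, ψ (σ x) = σ' (ψ x))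

noncomputable def mapRingHom : R →+* R' where
  toFun g := P'.coeff.symm (mapRange ψ (map_zero ψ) (P.coeff g))
  map_zero' := by simp
  map_add' g h := by simp [mapRange_add]
  map_one' := by
    rw [coeff_one, mapRange_single, map_one, ← P'.coeff_one, AddEquiv.symm_apply_apply]
  map_mul' g h := by
    refine P'.coeff.injective (Finsupp.ext fun n => ?_)
    simp only [AddEquiv.apply_symm_apply, mapRange_apply, coeff_mul, map_sum, map_mul,
      (Semiconj.iterate_right hψ _).eq]

theorem coeff_mapRingHom (g : R) (i : ℕ) :
    P'.coeff (mapRingHom P P' ψ hψ g) i = ψ (P.coeff g i) := by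
  simp [mapRingHom]

variable {P P' ψ hψ}

theorem degLT_mapRingHom {g : R} {m : ℕ} (hg : P.degLT g m) :
    P'.degLT (mapRingHom P P' ψ hψ g) m := fun i hi => by
  rw [coeff_mapRingHom, hg i hi, map_zero]

theorem monicDeg_mapRingHom {f : R} {m : ℕ} (hf : P.MonicDeg f m) :
    P'.MonicDeg (mapRingHom P P' ψ hψ f) m :=
  ⟨by rw [coeff_mapRingHom, hf.1, map_one],
    fun i hi => by rw [coeff_mapRingHom, hf.2 i hi, map_zero]⟩

theorem mapRingHom_eq_zero_iff {g : R} :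
    mapRingHom P P' ψ hψ g = 0 ↔ ∀ i, ψ (P.coeff g i) = 0 := by
  rw [← (map_eq_zero_iff _ P'.coeff.injective), Finsupp.ext_iff]
  simp only [coeff_mapRingHom, Finsupp.coe_zero, Pi.zero_apply]

theorem mapRingHom_modr {f : R} {m : ℕ} (hf : P.MonicDeg f m) {modr : R → R}
    (hmodr : P.IsModr f m modr) {modr' : R' → R'}
    (hmodr' : P'.IsModr (mapRingHom P P' ψ hψ f) m modr') (g : R) :
    mapRingHom P P' ψ hψ (modr g) = modr' (mapRingHom P P' ψ hψ g) := by
  obtain ⟨hr, q, hq⟩ := hmodr g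
  obtain ⟨hr', q', hq'⟩ := hmodr' (mapRingHom P P' ψ hψ g)
  refine eq_of_mul_add_eq_mul_add (monicDeg_mapRingHom (hψ := hψ) hf) (degLT_mapRingHom hr) hr'
    (q₁ := mapRingHom P P' ψ hψ q) (q₂ := q') ?_
  rw [← hq', ← map_mul, ← map_add, ← hq]

end Map

theorem exists_degLT_forall_mapRingHom_eq {S R : Type*} [Ring S] [Ring R] {σ : S →+* S}
    {P : SkewPolyRing S R σ 0} {ι : Type*} {S' R' : ι → Type*} [∀ j, Ring (S' j)]
    [∀ j, Ring (R' j)] {σ' : ∀ j, S' j →+* S' j}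
    {P' : ∀ j, SkewPolyRing (S' j) (R' j) (σ' j) 0}
    {ψ : ∀ j, S →+* S' j} {hψ : ∀ j x, ψ j (σ x) = σ' j (ψ j x)}
    (hsurj : ∀ c : ∀ j, S' j, ∃ a, ∀ j, ψ j a = c j) {m : ℕ} {v : ∀ j, R' j}
    (hv : ∀ j, (P' j).degLT (v j) m) :
    ∃ g : R, P.degLT g m ∧ ∀ j, mapRingHom P (P' j) (ψ j) (hψ j) g = v j := by
  choose a ha using fun i => hsurj fun j => (P' j).coeff (v j) i
  have hcoeff : ∀ i, P.coeff (P.coeff.symm (∑ i ∈ Finset.range m, single i (a i))) i =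
      if i < m then a i else 0 := fun i => by
    simp [Finsupp.finsetSum_apply, single_apply]
  refine ⟨P.coeff.symm (∑ i ∈ Finset.range m, single i (a i)), fun i hi => ?_, fun j => ?_⟩
  · rw [hcoeff, if_neg hi.not_gt]
  · refine (P' j).coeff.injective (Finsupp.ext fun i => ?_)
    rw [coeff_mapRingHom, hcoeff]
    split_ifs with hi
    · exact ha i j
    · rw [map_zero, hv j i (not_lt.mp hi)]

end SkewPolyRing

namespace Ideal

variable {A B : Type*} [CommRing A] [CommRing B]

theorem isCoprime_map (f : A →+* B) {I J : Ideal A} (h : IsCoprime I J) :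
    IsCoprime (I.map f) (J.map f) := by
  rw [isCoprime_iff_sup_eq] at h ⊢
  rw [← map_sup, h, map_top]

theorem pairwise_isCoprime_pow_of_isMaximal {ι : Type*} {q : ι → Ideal A}
    (hq : ∀ j, (q j).IsMaximal) (hne : Pairwise fun i j => q i ≠ q j) (s : ι → ℕ) :
    Pairwise (IsCoprime on fun j => q j ^ s j) := fun i j hij =>
  (isCoprime_iff_sup_eq.mpr ((hq i).coprime_of_ne (hq j) (hne hij))).pow

theorem mem_map_prod_iff_forall_mem {ι : Type*} [Fintype ι] (f : A →+* B) {I : ι → Ideal A}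
    (h : Pairwise (IsCoprime on fun j => (I j).map f)) {x : B} :
    x ∈ (∏ j, I j).map f ↔ ∀ j, x ∈ (I j).map f := by
  rw [show (∏ j, I j).map f = ∏ j, (I j).map f from map_prod (mapHom f) I Finset.univ,
    prod_eq_iInf_of_pairwise_isCoprime fun i _ j _ hij => h hij]
  simp [Submodule.mem_iInf]

end Ideal

theorem natural_order_quotient_CRT_general {F K R : Type*} [Field F] [Field K]
    [NumberField F] [Algebra F K] [Ring R]
    {k : ℕ} {R' : Fin k → Type*} [∀ j, Ring (R' j)]
    (m : ℕ) (hm : 2 ≤ m)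
    (σ₀ : 𝓞 K →+* 𝓞 K)
    (d : 𝓞 K)
    -- the natural order `Λ`: the Petit algebra of `f = t^m − d` inside `R = O_K[t;σ]`:
    (P : SkewPolyRing (𝓞 K) R σ₀ 0) (f : R)
    (hf : f = P.coeff.symm (Finsupp.single m 1 - Finsupp.single 0 d))
    (modr : R → R) (hmodr : P.IsModr f m modr)
    -- the factorization `I = q₁^{s₁} ⋯ q_k^{s_k}` into powers of distinct primes:
    (q : Fin k → Ideal (𝓞 F)) (s : Fin k → ℕ) (hq : ∀ j, (q j).IsPrime)
    (hq0 : ∀ j, q j ≠ ⊥) (hqd : ∀ i j, i ≠ j → q i ≠ q j)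
    (I : Ideal (𝓞 F)) (hI : I = ∏ j, q j ^ s j)
    -- for each `j`, the reduced skew polynomial ring over `O_K/q_j^{s_j}O_K`:
    (J : Fin k → Ideal (𝓞 K))
    (hJ : ∀ j, J j = Ideal.map (algebraMap (𝓞 F) (𝓞 K)) (q j ^ s j))
    (σb : ∀ j, (𝓞 K ⧸ J j) →+* (𝓞 K ⧸ J j))
    (hσb : ∀ j, ∀ x : 𝓞 K,
      σb j (Ideal.Quotient.mk (J j) x) = Ideal.Quotient.mk (J j) (σ₀ x))
    (P' : ∀ j, SkewPolyRing (𝓞 K ⧸ J j) (R' j) (σb j) 0)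
    (red : ∀ j, R → R' j)
    (hred : ∀ j, ∀ g : R, red j g = (P' j).coeff.symm
      (Finsupp.mapRange (Ideal.Quotient.mk (J j)) (map_zero _) (P.coeff g)))
    (modr' : ∀ j, R' j → R' j) (hmodr' : ∀ j, (P' j).IsModr (red j f) m (modr' j)) :
    -- the combined reduction map is additive and unital:
    (∀ j, ∀ g h : R, red j (g + h) = red j g + red j h) ∧ (∀ j, red j (1 : R) = 1) ∧
    -- it is multiplicative for the Petit products in each factor:
    (∀ j, ∀ g h : R, P.degLT g m → P.degLT h m →
        red j (modr (g * h)) = modr' j (red j g * red j h)) ∧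
    -- it maps `Λ` onto the direct product of the reduced Petit algebras:
    (∀ j, ∀ g : R, P.degLT g m → (P' j).degLT (red j g) m) ∧
    (∀ v : ∀ j, R' j, (∀ j, (P' j).degLT (v j) m) →
        ∃ g : R, P.degLT g m ∧ ∀ j, red j g = v j) ∧
    -- its kernel on `Λ` is `IΛ = {Σ_{i<m} aᵢtⁱ : aᵢ ∈ I·O_K}`:
    (∀ g : R, P.degLT g m → ((∀ j, red j g = 0) ↔
        ∀ i, P.coeff g i ∈ Ideal.map (algebraMap (𝓞 F) (𝓞 K)) I)) := by
  obtain rfl : J = fun j => (q j ^ s j).map (algebraMap (𝓞 F) (𝓞 K)) := funext hJ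
  have hcop : Pairwise (IsCoprime on fun j => (q j ^ s j).map (algebraMap (𝓞 F) (𝓞 K))) :=
    fun i j hij => Ideal.isCoprime_map _ <| Ideal.pairwise_isCoprime_pow_of_isMaximal
      (fun j => (hq j).isMaximal (hq0 j)) (fun i j => hqd i j) s hij
  obtain rfl : red = fun j => ⇑(SkewPolyRing.mapRingHom P (P' j) (Ideal.Quotient.mk _)
      fun x => (hσb j x).symm) :=
    funext fun j => funext (hred j)
  have hf_monic : P.MonicDeg f m :=
    hf ▸ P.monicDeg_coeff_symm_single_sub_single (zero_lt_two.trans_le hm) d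
  refine ⟨fun j => map_add _, fun j => map_one _, fun j g h _ _ => ?_,
    fun j g hg => SkewPolyRing.degLT_mapRingHom hg,
    fun v hv =>
      SkewPolyRing.exists_degLT_forall_mapRingHom_eq (Ideal.pi_quotient_surjective hcop) hv,
    fun g _ => ?_⟩
  · beta_reduce
    rw [SkewPolyRing.mapRingHom_modr hf_monic hmodr (hmodr' j), map_mul]
  · simp only [SkewPolyRing.mapRingHom_eq_zero_iff, Ideal.Quotient.eq_zero_iff_mem, hI,
      Ideal.mem_map_prod_iff_forall_mem _ hcop]
    exact forall_comm

set_option synthInstance.maxHeartbeats 1000000 in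
set_option maxHeartbeats 1000000 in
/-- Let `K/F` be a cyclic Galois extension of number fields of degree `m` with
`Gal(K/F) = ⟨σ⟩`, `d ∈ O_K \ O_F` with `f = t^m − d` irreducible in `K[t;σ]`, and `Λ` the
natural order in `(K/F,σ,d)`.  Let `I = q₁^{s₁}⋯q_k^{s_k}` be the factorization of a
nonzero ideal `I` of `O_F` into powers of distinct prime ideals.  Then `Λ/IΛ` is
isomorphic as an `O_F/I`-algebra to the direct product over `j` of the Petit algebras
`((O_K/q_j^{s_j}O_K)/(O_F/q_j^{s_j}), σ̄, d + q_j^{s_j}O_K)`: the combined coefficientwise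
reduction map `g ↦ (ḡ⁽¹⁾, …, ḡ⁽ᵏ⁾)` is additive, unital, multiplicative for the Petit
products in each factor, maps `Λ` onto the product of the reduced Petit algebras, and its
kernel is `IΛ = {Σ_{i<m} aᵢtⁱ : aᵢ ∈ I·O_K}`. -/
theorem natural_order_quotient_CRT {F K R RK : Type*} [Field F] [Field K]
    [NumberField F] [NumberField K] [Algebra F K] [IsGalois F K] [Ring R] [Ring RK]
    {k : ℕ} {R' : Fin k → Type*} [∀ j, Ring (R' j)]
    (m : ℕ) (hm : 2 ≤ m) (hdeg : Module.finrank F K = m)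
    (σ : K ≃ₐ[F] K) (hgen : ∀ τ : K ≃ₐ[F] K, τ ∈ Subgroup.zpowers σ)
    (σ₀ : 𝓞 K →+* 𝓞 K) (hσ₀ : ∀ x : 𝓞 K, (σ₀ x : K) = σ (x : K))
    (d : 𝓞 K) (hd : d ∉ Set.range (algebraMap (𝓞 F) (𝓞 K)))
    -- `f = t^m − d` is irreducible in `K[t;σ]`:
    (σK : K →+* K) (hσK : ∀ x : K, σK x = σ x)
    (PK : SkewPolyRing K RK σK 0)
    (hirr : ¬ ∃ g h : RK, PK.degLT g m ∧ PK.degLT h m ∧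
      PK.coeff.symm (Finsupp.single m 1 - Finsupp.single 0 (d : K)) = g * h)
    -- the natural order `Λ`: the Petit algebra of `f = t^m − d` inside `R = O_K[t;σ]`:
    (P : SkewPolyRing (𝓞 K) R σ₀ 0) (f : R)
    (hf : f = P.coeff.symm (Finsupp.single m 1 - Finsupp.single 0 d))
    (modr : R → R) (hmodr : P.IsModr f m modr)
    -- the factorization `I = q₁^{s₁} ⋯ q_k^{s_k}` into powers of distinct primes:
    (q : Fin k → Ideal (𝓞 F)) (s : Fin k → ℕ) (hq : ∀ j, (q j).IsPrime)
    (hq0 : ∀ j, q j ≠ ⊥) (hs : ∀ j, 0 < s j) (hqd : ∀ i j, i ≠ j → q i ≠ q j)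
    (I : Ideal (𝓞 F)) (hI : I = ∏ j, q j ^ s j) (hIne : I ≠ ⊥)
    -- for each `j`, the reduced skew polynomial ring over `O_K/q_j^{s_j}O_K`:
    (J : Fin k → Ideal (𝓞 K))
    (hJ : ∀ j, J j = Ideal.map (algebraMap (𝓞 F) (𝓞 K)) (q j ^ s j))
    (σb : ∀ j, (𝓞 K ⧸ J j) →+* (𝓞 K ⧸ J j))
    (hσb : ∀ j, ∀ x : 𝓞 K,
      σb j (Ideal.Quotient.mk (J j) x) = Ideal.Quotient.mk (J j) (σ₀ x))
    (P' : ∀ j, SkewPolyRing (𝓞 K ⧸ J j) (R' j) (σb j) 0)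
    (red : ∀ j, R → R' j)
    (hred : ∀ j, ∀ g : R, red j g = (P' j).coeff.symm
      (Finsupp.mapRange (Ideal.Quotient.mk (J j)) (map_zero _) (P.coeff g)))
    (modr' : ∀ j, R' j → R' j) (hmodr' : ∀ j, (P' j).IsModr (red j f) m (modr' j)) :
    -- the combined reduction map is additive and unital:
    (∀ j, ∀ g h : R, red j (g + h) = red j g + red j h) ∧ (∀ j, red j (1 : R) = 1) ∧
    -- it is multiplicative for the Petit products in each factor:
    (∀ j, ∀ g h : R, P.degLT g m → P.degLT h m →
        red j (modr (g * h)) = modr' j (red j g * red j h)) ∧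
    -- it maps `Λ` onto the direct product of the reduced Petit algebras:
    (∀ j, ∀ g : R, P.degLT g m → (P' j).degLT (red j g) m) ∧
    (∀ v : ∀ j, R' j, (∀ j, (P' j).degLT (v j) m) →
        ∃ g : R, P.degLT g m ∧ ∀ j, red j g = v j) ∧
    -- its kernel on `Λ` is `IΛ = {Σ_{i<m} aᵢtⁱ : aᵢ ∈ I·O_K}`:
    (∀ g : R, P.degLT g m → ((∀ j, red j g = 0) ↔
        ∀ i, P.coeff g i ∈ Ideal.map (algebraMap (𝓞 F) (𝓞 K)) I)) :=
  natural_order_quotient_CRT_general m hm σ₀ d P f hf modr hmodr q s hq hq0 hqd I hI J hJ σb hσb P'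
    red hred modr' hmodr'
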